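/- arXiv:2410.22310 — 2 statements merged into one kernel-verified Lean document; each statement's English description precedes it below -/
import Mathlib

section
/- Let C_{n+1} --∂_{n+1}--> C_n --∂_n--> C_{n-1} be linear maps between finite-dimensional real inner product spaces with ∂_n ∘ ∂_{n+1} = 0, and let Δ = ∂_n* ∂_n + ∂_{n+1} ∂_{n+1}* : C_n → C_n be the Laplacian (where * denotes adjoint). Then the map ker Δ → ker ∂_n / im ∂_{n+1} sending u to its class [u] is a linear isomorphism. -/
/-- Hodge: for a two-step complex of finite-dimensional real inner
product spaces with Laplacian Δ = ∂₀*∂₀ + ∂₁∂₁*, the map u ↦ [u] is a linear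
isomorphism from ker Δ onto the homology ker ∂₀ / im ∂₁. -/
theorem hodge_isomorphism {C₁ C₂ C₃ : Type*}
    [NormedAddCommGroup C₁] [InnerProductSpace ℝ C₁] [FiniteDimensional ℝ C₁]
    [NormedAddCommGroup C₂] [InnerProductSpace ℝ C₂] [FiniteDimensional ℝ C₂]
    [NormedAddCommGroup C₃] [InnerProductSpace ℝ C₃] [FiniteDimensional ℝ C₃]
    (d₁ : C₃ →ₗ[ℝ] C₂) (d₀ : C₂ →ₗ[ℝ] C₁) (hdd : d₀ ∘ₗ d₁ = 0)
    (Δ : C₂ →ₗ[ℝ] C₂)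
    (hΔ : Δ = (LinearMap.adjoint d₀) ∘ₗ d₀ + d₁ ∘ₗ (LinearMap.adjoint d₁)) :
    ∃ e : LinearMap.ker Δ ≃ₗ[ℝ]
        (LinearMap.ker d₀ ⧸
          (LinearMap.range d₁).comap (LinearMap.ker d₀).subtype),
      ∀ (u : C₂) (hu : u ∈ LinearMap.ker Δ) (huZ : u ∈ LinearMap.ker d₀),
        e ⟨u, hu⟩ = Submodule.Quotient.mk ⟨u, huZ⟩ := by
  classical
  -- characterization of ker Δ
  have hker : ∀ u : C₂, u ∈ LinearMap.ker Δ ↔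
      d₀ u = 0 ∧ LinearMap.adjoint d₁ u = 0 := by
    intro u
    constructor
    · intro hu
      have h0 : Δ u = 0 := hu
      have hsum : inner ℝ (d₀ u) (d₀ u) +
          inner ℝ (LinearMap.adjoint d₁ u) (LinearMap.adjoint d₁ u) = (0 : ℝ) := by
        have h1 : inner ℝ (Δ u) u = (0 : ℝ) := by rw [h0]; simp
        rw [hΔ] at h1
        simp only [LinearMap.add_apply, LinearMap.comp_apply, inner_add_left] at h1
        rw [← LinearMap.adjoint_inner_right d₁, LinearMap.adjoint_inner_left] at h1
        exact h1
      have h1 : (0:ℝ) ≤ inner ℝ (d₀ u) (d₀ u) := real_inner_self_nonneg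
      have h2 : (0:ℝ) ≤ inner ℝ (LinearMap.adjoint d₁ u) (LinearMap.adjoint d₁ u) :=
        real_inner_self_nonneg
      have e1 : inner ℝ (d₀ u) (d₀ u) = (0:ℝ) := by linarith
      have e2 : inner ℝ (LinearMap.adjoint d₁ u) (LinearMap.adjoint d₁ u) = (0:ℝ) := by
        linarith
      exact ⟨inner_self_eq_zero.mp e1, inner_self_eq_zero.mp e2⟩
    · rintro ⟨h1, h2⟩
      show Δ u = 0
      rw [hΔ]
      simp [h1, h2]
  -- the linear map ker Δ → homology
  set Z := LinearMap.ker d₀ with hZ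
  set B := (LinearMap.range d₁).comap Z.subtype with hB
  have hmem : ∀ u : LinearMap.ker Δ, (u : C₂) ∈ Z := fun u =>
    LinearMap.mem_ker.mpr ((hker u).mp u.2).1
  let f : LinearMap.ker Δ →ₗ[ℝ] Z ⧸ B :=
    B.mkQ ∘ₗ (LinearMap.codRestrict Z (LinearMap.ker Δ).subtype hmem)
  have hinj : Function.Injective f := by
    rw [injective_iff_map_eq_zero]
    intro u hu
    have : (⟨(u : C₂), hmem u⟩ : Z) ∈ B := by
      have hu' : Submodule.Quotient.mk (p := B) (⟨(u : C₂), hmem u⟩ : Z) = 0 := hu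
      exact (Submodule.Quotient.mk_eq_zero B).mp hu'
    obtain ⟨v, hv⟩ := this
    have hself : (inner ℝ (u : C₂) (u : C₂) : ℝ) = 0 := by
      have h2 := ((hker u).mp u.2).2
      have hv' : d₁ v = (u : C₂) := by simpa using hv
      have h3 : (inner ℝ (d₁ v) (u : C₂) : ℝ) = 0 := by
        rw [← LinearMap.adjoint_inner_right, h2, inner_zero_right]
      nth_rewrite 1 [← hv']
      exact h3
    have : (u : C₂) = 0 := inner_self_eq_zero.mp hself
    exact Subtype.ext this
  have hsurj : Function.Surjective f := by
    intro q
    obtain ⟨z, rfl⟩ := Submodule.Quotient.mk_surjective _ q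
    obtain ⟨p, hp, w, hw, hzw⟩ :=
      (LinearMap.range d₁).exists_add_mem_mem_orthogonal (z : C₂)
    -- w ∈ ker d₀
    have hpZ : d₀ p = 0 := by
      obtain ⟨v, rfl⟩ := hp
      have := DFunLike.congr_fun hdd v
      simpa using this
    have hwZ : d₀ w = 0 := by
      have hz0 : d₀ (z : C₂) = 0 := z.2
      have : d₀ (p + w) = 0 := by rw [← hzw]; exact hz0
      simpa [hpZ] using this
    -- w ∈ ker adjoint d₁
    have hwA : LinearMap.adjoint d₁ w = 0 := by
      have hself : inner ℝ (LinearMap.adjoint d₁ w) (LinearMap.adjoint d₁ w) = (0:ℝ) := by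
        rw [LinearMap.adjoint_inner_right]
        exact (Submodule.mem_orthogonal _ _).mp hw _ ⟨_, rfl⟩
      exact inner_self_eq_zero.mp hself
    have hwK : w ∈ LinearMap.ker Δ := (hker w).mpr ⟨hwZ, hwA⟩
    refine ⟨⟨w, hwK⟩, ?_⟩
    show Submodule.Quotient.mk (⟨w, _⟩ : Z) = Submodule.Quotient.mk z
    rw [Submodule.Quotient.eq]
    show (⟨w, _⟩ : Z) - z ∈ B
    refine Submodule.mem_comap.mpr ?_
    have : ((⟨w, LinearMap.mem_ker.mpr hwZ⟩ : Z) - z : Z) = (⟨w - z, _⟩ : Z) := rfl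
    show (w - (z : C₂)) ∈ LinearMap.range d₁
    have : w - (z : C₂) = -p := by rw [hzw]; abel
    rw [this]
    exact neg_mem hp
  refine ⟨LinearEquiv.ofBijective f ⟨hinj, hsurj⟩, fun u hu huZ => rfl⟩
end

section
/- Let H_3 be the subgroup of SL_3(𝔽_3) generated by s = [[0,0,1],[0,2,0],[1,1,0]] and t = [[1,2,0],[0,2,0],[1,1,2]]. Then H_3 is isomorphic to S_3 × S_3 (in particular it has order 36). -/
open Matrix Subgroup Equiv

abbrev SL3' := Matrix.SpecialLinearGroup (Fin 3) (ZMod 3)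

instance : DecidableEq SL3' := fun a b => decidable_of_iff (a.val = b.val) Subtype.ext_iff.symm

def mS : SL3' := ⟨!![0,0,1; 0,2,0; 1,1,0], by decide⟩
def mT : SL3' := ⟨!![1,2,0; 0,2,0; 1,1,2], by decide⟩
def mA : SL3' := ⟨!![2,0,0; 0,1,0; 0,2,2], by decide⟩
def mB : SL3' := ⟨!![1,1,0; 0,1,0; 0,2,1], by decide⟩
def mC : SL3' := ⟨!![0,2,1; 0,2,0; 1,2,0], by decide⟩
def mD : SL3' := ⟨!![0,1,2; 0,1,0; 1,2,2], by decide⟩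

def phi (p : Equiv.Perm (Fin 3)) : SL3' :=
  if p 0 = 0 then (if p 1 = 1 then 1 else mA*mB)
  else if p 0 = 1 then (if p 1 = 0 then mA else mB)
  else (if p 1 = 0 then mB*mB else mA*mB*mB)

def psi (p : Equiv.Perm (Fin 3)) : SL3' :=
  if p 0 = 0 then (if p 1 = 1 then 1 else mC*mD)
  else if p 0 = 1 then (if p 1 = 0 then mC else mD)
  else (if p 1 = 0 then mD*mD else mC*mD*mD)

lemma phi_mul : ∀ p q, phi (p * q) = phi p * phi q := by decide

lemma psi_mul : ∀ p q, psi (p * q) = psi p * psi q := by decide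

lemma phi_psi_comm : ∀ p q, psi q * phi p = phi p * psi q := by decide

def F : Equiv.Perm (Fin 3) × Equiv.Perm (Fin 3) →* SL3' where
  toFun x := phi x.1 * psi x.2
  map_one' := by decide
  map_mul' x y := by
    show phi (x.1 * y.1) * psi (x.2 * y.2) = phi x.1 * psi x.2 * (phi y.1 * psi y.2)
    rw [phi_mul, psi_mul, mul_assoc (phi x.1), ← mul_assoc (phi y.1), ← phi_psi_comm,
      mul_assoc (psi x.2), ← mul_assoc (phi x.1)]

/-- the subgroup of SL₃(𝔽₃) generated by s and t is isomorphic to S₃ × S₃. -/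
theorem H3_iso_S3_prod_S3
    (s t : Matrix.SpecialLinearGroup (Fin 3) (ZMod 3))
    (hs : (s : Matrix (Fin 3) (Fin 3) (ZMod 3)) = !![0,0,1; 0,2,0; 1,1,0])
    (ht : (t : Matrix (Fin 3) (Fin 3) (ZMod 3)) = !![1,2,0; 0,2,0; 1,1,2]) :
    Nonempty
      ((Subgroup.closure {s, t} : Subgroup (Matrix.SpecialLinearGroup (Fin 3) (ZMod 3)))
        ≃* Equiv.Perm (Fin 3) × Equiv.Perm (Fin 3)) := by
  have hs' : s = mS := Subtype.ext hs
  have ht' : t = mT := Subtype.ext ht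
  subst hs' ht'
  set H : Subgroup SL3' := Subgroup.closure {mS, mT} with hH
  have hSm : mS ∈ H := Subgroup.subset_closure (by simp)
  have hTm : mT ∈ H := Subgroup.subset_closure (by simp)
  have hA : mA ∈ H := by
    have e : mA = mS*mT*mS*mT*mS*mT := by decide
    rw [e]
    exact mul_mem (mul_mem (mul_mem (mul_mem (mul_mem hSm hTm) hSm) hTm) hSm) hTm
  have hB : mB ∈ H := by
    have e : mB = mS*mS := by decide
    rw [e]; exact mul_mem hSm hSm
  have hC : mC ∈ H := by
    have e : mC = mS*mS*mS := by decide
    rw [e]; exact mul_mem (mul_mem hSm hSm) hSm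
  have hD : mD ∈ H := by
    have e : mD = mS*mT*mS*mT := by decide
    rw [e]; exact mul_mem (mul_mem (mul_mem hSm hTm) hSm) hTm
  have hphi : ∀ p, phi p ∈ H := by
    intro p
    have h6 : phi p = 1 ∨ phi p = mA ∨ phi p = mB ∨ phi p = mA*mB ∨ phi p = mB*mB ∨
        phi p = mA*mB*mB := by revert p; decide
    rcases h6 with h|h|h|h|h|h <;> rw [h]
    · exact one_mem H
    · exact hA
    · exact hB
    · exact mul_mem hA hB
    · exact mul_mem hB hB
    · exact mul_mem (mul_mem hA hB) hB
  have hpsi : ∀ p, psi p ∈ H := by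
    intro p
    have h6 : psi p = 1 ∨ psi p = mC ∨ psi p = mD ∨ psi p = mC*mD ∨ psi p = mD*mD ∨
        psi p = mC*mD*mD := by revert p; decide
    rcases h6 with h|h|h|h|h|h <;> rw [h]
    · exact one_mem H
    · exact hC
    · exact hD
    · exact mul_mem hC hD
    · exact mul_mem hD hD
    · exact mul_mem (mul_mem hC hD) hD
  have hrange : H = F.range := by
    apply le_antisymm
    · rw [hH]
      apply Subgroup.closure_le _ |>.2
      rintro x (rfl | rfl)
      · exact ⟨(finRotate 3 * finRotate 3, Equiv.swap 0 1), by decide⟩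
      · exact ⟨(Equiv.swap 0 2, Equiv.swap 0 2), by decide⟩
    · rintro x ⟨a, rfl⟩
      exact mul_mem (hphi a.1) (hpsi a.2)
  have hinj : Function.Injective F := (injective_iff_map_eq_one F).mpr (by decide)
  exact ⟨(MulEquiv.subgroupCongr hrange).trans (MonoidHom.ofInjective hinj).symm⟩
end
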